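/- arXiv:2509.07761 — 2 statements merged into one kernel-verified Lean document; each statement's English description precedes it below -/
import Mathlib

section
/- Let 1 ≤ k_1 < k_2 ≤ q be integers. Then PRS_q(k_1) ∩ PRS_q(k_2) = (0, RS_q(k_1 - 1)), i.e. the intersection consists exactly of codewords whose first coordinate is 0 and whose remaining q coordinates form a word of the affine Reed–Solomon code RS_q(k_1-1). -/
/-!
A word of `PRS_q(d + 1)` is `(p_d, p(α₁), …, p(α_q))` for a polynomial `p` of degree `≤ d`:
dehomogenize at `X₀ = 1`, and the value at `(0, 1)` is the coefficient of `X₁ ^ d`.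
If a word lies in `PRS_q(d₁ + 1)` and in `PRS_q(d₂ + 1)` with `d₁ < d₂ < q`, its two polynomials
agree at all `q` points of `F`, hence coincide. The coordinate at infinity is then the coefficient
of degree `d₂` of a polynomial of degree `≤ d₁`, so it vanishes; this in turn kills the
coefficient of degree `d₁`, leaving a word of `RS_q(d₁)` behind a zero.
Conversely, a polynomial of degree `< d₁` gives such a word in `PRS_q(d + 1)` for every `d ≥ d₁`.
-/

/-- Evaluation points of the projective Reed–Solomon code: the point at infinity `(0,1)`
(indexed by `none`) and the affine points `(1,α)` for `α ∈ F` (indexed by `some α`). -/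
noncomputable def PRSpt (F : Type*) [Field F] (p : Option F) : Fin 2 → F :=
  Option.elim p ![(0 : F), 1] (fun α => ![1, α])

/-- The projective Reed–Solomon code `PRS_q(k)`: the image of the space of homogeneous
polynomials of degree `k - 1` in two variables under evaluation at the `q+1` points of
`ℙ¹(F)`.  By convention it is `{0}` for `k ≤ 0` (and it is the full space for `k ≥ q+1`). -/
noncomputable def PRS (F : Type*) [Field F] (k : ℤ) : Submodule F (Option F → F) :=
  if k ≤ 0 then ⊥
  else (MvPolynomial.homogeneousSubmodule (Fin 2) F (k - 1).toNat).map
    (LinearMap.pi fun p : Option F => (MvPolynomial.aeval (PRSpt F p)).toLinearMap)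

/-- The affine Reed–Solomon code `RS_q(k)`: evaluations of polynomials of degree `< k` at
all elements of `F`.  By convention it is `{0}` for `k ≤ 0` and the full space for `k ≥ q`. -/
noncomputable def RS (F : Type*) [Field F] (k : ℤ) : Submodule F (F → F) :=
  (Polynomial.degreeLT F k.toNat).map
    (LinearMap.pi fun α : F => (Polynomial.aeval α).toLinearMap)

/-- `(0, C)`: the code obtained by prepending a zero coordinate (at `none`) to each word. -/
noncomputable def zeroExt (F : Type*) [Field F] (C : Submodule F (F → F)) :
    Submodule F (Option F → F) :=
  C.comap (LinearMap.funLeft F F some) ⊓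
    LinearMap.ker (LinearMap.proj (R := F) (φ := fun _ : Option F => F) none)

open Polynomial

namespace Polynomial

variable {R : Type*} [CommSemiring R]

/-- `X₀ ^ n * p (X₁ / X₀)`: `homogenize` with the two variables exchanged, so that the affine
points are `(1, α)` and the point at infinity is `(0, 1)`, as in `PRSpt`. -/
noncomputable def homogenizeSwap (p : R[X]) (n : ℕ) : MvPolynomial (Fin 2) R :=
  MvPolynomial.rename (Equiv.swap 0 1) (p.homogenize n)

lemma isHomogeneous_homogenizeSwap (p : R[X]) (n : ℕ) : (p.homogenizeSwap n).IsHomogeneous n :=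
  (isHomogeneous_homogenize p).rename_isHomogeneous

lemma aeval_homogenizeSwap_of_eq_one {A : Type*} [CommSemiring A] [Algebra R A] {p : R[X]}
    {n : ℕ} (hn : p.natDegree ≤ n) (g : Fin 2 → A) (hg : g 0 = 1) :
    MvPolynomial.aeval g (p.homogenizeSwap n) = aeval (g 1) p := by
  rw [homogenizeSwap, MvPolynomial.aeval_rename, aeval_homogenize_of_eq_one hn] <;> simp [hg]

lemma aeval_homogenizeSwap_zero_one (p : R[X]) (n : ℕ) :
    MvPolynomial.aeval ![(0 : R), 1] (p.homogenizeSwap n) = p.coeff n := by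
  rw [homogenizeSwap, MvPolynomial.aeval_rename, homogenize, map_sum,
    Finset.sum_eq_single (n, 0)]
  · simp [MvPolynomial.eval_monomial, Finsupp.prod_fintype]
  · rintro ⟨k, l⟩ hkl hne
    have hl : l ≠ 0 := by rintro rfl; simp_all
    simp [MvPolynomial.eval_monomial, Finsupp.prod_fintype, hl]
  · simp

end Polynomial

namespace MvPolynomial

variable {R : Type*} [CommSemiring R] {g : MvPolynomial (Fin 2) R} {n : ℕ}

lemma IsHomogeneous.natDegree_aeval_one_X_le (hg : g.IsHomogeneous n) :
    (MvPolynomial.aeval ![1, (Polynomial.X : R[X])] g).natDegree ≤ n := by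
  rw [g.as_sum, map_sum]
  refine Polynomial.natDegree_sum_le_of_forall_le _ _ fun s hs => ?_
  have hdeg : s 0 + s 1 = n := by
    simpa [Finsupp.weight_apply, Finsupp.sum_fintype] using hg (mem_support_iff.mp hs)
  calc _ = (Polynomial.C (coeff s g) * Polynomial.X ^ s 1).natDegree := by
        simp [aeval_monomial, Finsupp.prod_fintype]
    _ ≤ s 1 := Polynomial.natDegree_C_mul_X_pow_le _ _
    _ ≤ n := by omega

lemma IsHomogeneous.homogenizeSwap_aeval_one_X (hg : g.IsHomogeneous n) :
    (MvPolynomial.aeval ![1, (Polynomial.X : R[X])] g).homogenizeSwap n = g := by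
  have hswap : MvPolynomial.aeval ![Polynomial.X, 1] (rename (Equiv.swap 0 1) g) =
      MvPolynomial.aeval ![1, (Polynomial.X : R[X])] g := by
    rw [aeval_rename]
    congr 2
    ext i; fin_cases i <;> rfl
  rw [Polynomial.homogenizeSwap,
    Polynomial.homogenize_eq_of_isHomogeneous hg.rename_isHomogeneous hswap, rename_rename,
    ← Equiv.coe_trans, Equiv.swap_swap, Equiv.coe_refl, rename_id_apply]

end MvPolynomial

section ReedSolomon

variable {F : Type*} [Field F]

lemma mem_PRS_iff {d : ℕ} {v : Option F → F} :
    v ∈ PRS F (d + 1) ↔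
      ∃ p : F[X], p.natDegree ≤ d ∧ v none = p.coeff d ∧ ∀ α, v (some α) = p.eval α := by
  rw [PRS, if_neg (by omega), show ((d : ℤ) + 1 - 1).toNat = d by omega]
  simp only [Submodule.mem_map, MvPolynomial.mem_homogeneousSubmodule]
  constructor
  · rintro ⟨g, hg, rfl⟩
    set p := MvPolynomial.aeval ![1, (X : F[X])] g
    have hp : p.natDegree ≤ d := hg.natDegree_aeval_one_X_le
    rw [← hg.homogenizeSwap_aeval_one_X]
    refine ⟨p, hp, aeval_homogenizeSwap_zero_one p d, fun α => ?_⟩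
    exact (aeval_homogenizeSwap_of_eq_one hp (PRSpt F (some α)) rfl).trans (aeval_def _ _)
  · rintro ⟨p, hp, hnone, hsome⟩
    refine ⟨p.homogenizeSwap d, isHomogeneous_homogenizeSwap p d, funext fun o => ?_⟩
    cases o with
    | none => exact (aeval_homogenizeSwap_zero_one p d).trans hnone.symm
    | some α =>
      exact (aeval_homogenizeSwap_of_eq_one hp (PRSpt F (some α)) rfl).trans (hsome α).symm

lemma mem_RS_iff {k : ℕ} {w : F → F} :
    w ∈ RS F k ↔ ∃ p ∈ degreeLT F k, ∀ α, w α = p.eval α := by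
  simp only [RS, Int.toNat_natCast, Submodule.mem_map, funext_iff]
  simp [eq_comm]

lemma mem_zeroExt_iff {C : Submodule F (F → F)} {v : Option F → F} :
    v ∈ zeroExt F C ↔ (fun α => v (some α)) ∈ C ∧ v none = 0 :=
  Iff.rfl

lemma zeroExt_RS_le_PRS {d₁ d : ℕ} (h : d₁ ≤ d) : zeroExt F (RS F d₁) ≤ PRS F (d + 1) := by
  intro v hv
  obtain ⟨hRS, hnone⟩ := mem_zeroExt_iff.1 hv
  obtain ⟨p, hp, hsome⟩ := mem_RS_iff.1 hRS
  rw [mem_degreeLT] at hp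
  refine mem_PRS_iff.2 ⟨p, natDegree_le_iff_degree_le.2 (hp.le.trans (by exact_mod_cast h)),
    ?_, hsome⟩
  rw [hnone, coeff_eq_zero_of_degree_lt (hp.trans_le (by exact_mod_cast h))]

lemma PRS_inf_PRS_le_zeroExt_RS [Fintype F] {d₁ d₂ : ℕ} (h : d₁ < d₂)
    (hq : d₂ < Fintype.card F) : PRS F (d₁ + 1) ⊓ PRS F (d₂ + 1) ≤ zeroExt F (RS F d₁) := by
  rintro v ⟨hv₁, hv₂⟩
  obtain ⟨p₁, hp₁, hnone₁, hsome₁⟩ := mem_PRS_iff.1 hv₁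
  obtain ⟨p₂, hp₂, hnone₂, hsome₂⟩ := mem_PRS_iff.1 hv₂
  have hp : p₁ = p₂ := eq_of_natDegree_lt_card_of_eval_eq p₁ p₂ Function.injective_id
    (fun α => (hsome₁ α).symm.trans (hsome₂ α)) (max_lt (by omega) (by omega))
  have hnone : v none = 0 := by
    rw [hnone₂, ← hp, coeff_eq_zero_of_natDegree_lt (by omega)]
  refine mem_zeroExt_iff.2 ⟨mem_RS_iff.2 ⟨p₁, ?_, hsome₁⟩, hnone⟩
  rw [mem_degreeLT, degree_lt_iff_coeff_zero]
  intro m hm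
  rcases hm.eq_or_lt with rfl | hm
  · rw [← hnone₁, hnone]
  · exact coeff_eq_zero_of_natDegree_lt (by omega)

end ReedSolomon

/-- for `1 ≤ k₁ < k₂ ≤ q`, `PRS_q(k₁) ∩ PRS_q(k₂) = (0, RS_q(k₁ - 1))`. -/
theorem PRS_inter (F : Type*) [Field F] [Fintype F] (q k₁ k₂ : ℕ)
    (hq : Fintype.card F = q) (h1 : 1 ≤ k₁) (h12 : k₁ < k₂) (h2 : k₂ ≤ q) :
    PRS F (k₁ : ℤ) ⊓ PRS F (k₂ : ℤ) = zeroExt F (RS F ((k₁ : ℤ) - 1)) := by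
  obtain ⟨d₁, rfl⟩ : ∃ d, k₁ = d + 1 := ⟨k₁ - 1, by omega⟩
  obtain ⟨d₂, rfl⟩ : ∃ d, k₂ = d + 1 := ⟨k₂ - 1, by omega⟩
  rw [show ((d₁ + 1 : ℕ) : ℤ) - 1 = d₁ by omega]
  push_cast
  exact le_antisymm (PRS_inf_PRS_le_zeroExt_RS (by omega) (by omega))
    (le_inf (zeroExt_RS_le_PRS le_rfl) (zeroExt_RS_le_PRS (by omega)))
end

section
/- Let e ≥ 2 and a,b ∈ ℕ with 1 ≤ a ≤ q-1 and 0 ≤ b - ea ≤ q-1. Then the minimum distance d^⊥ of the dual of C_e(a,b) = Σ_{d=0}^{a} span{(0^{a-d}, α_1^d,…,α_q^d)} ⊗ PRS_q(b - ed + 1) ⊆ F_q^{(q+1)^2} satisfies min{a, b-ea} + 2 ≤ d^⊥ ≤ min{a, b} + 2. -/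
noncomputable def dualCode (F : Type*) [Field F] {ι : Type*} [Fintype ι]
    (C : Submodule F (ι → F)) : Submodule F (ι → F) where
  carrier := {x | ∀ c ∈ C, ∑ i, x i * c i = 0}
  zero_mem' := by intro c _; simp
  add_mem' := by
    intro x y hx hy c hc
    simp only [Pi.add_apply, add_mul, Finset.sum_add_distrib]
    rw [hx c hc, hy c hc, add_zero]
  smul_mem' := by
    intro a x hx c hc
    simp only [Pi.smul_apply, smul_eq_mul, mul_assoc, ← Finset.mul_sum]
    rw [hx c hc, mul_zero]

noncomputable def minDist (F : Type*) [Field F] {ι : Type*} [Fintype ι] [DecidableEq F]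
    (C : Submodule F (ι → F)) : ℕ :=
  sInf {w | ∃ c ∈ C, c ≠ 0 ∧ hammingNorm c = w}

/-- The weight of a matrix codeword: the number of nonzero entries. -/
noncomputable def wt2 {F : Type*} [Zero F] [DecidableEq F] {ι₁ ι₂ : Type*} [Fintype ι₁]
    [Fintype ι₂] (m : ι₂ → ι₁ → F) : ℕ :=
  hammingNorm (fun p : ι₂ × ι₁ => m p.1 p.2)

noncomputable def minDist2 (F : Type*) [Field F] [DecidableEq F] {ι₁ ι₂ : Type*} [Fintype ι₁]
    [Fintype ι₂] (C : Submodule F (ι₂ → ι₁ → F)) : ℕ :=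
  sInf {w | ∃ m ∈ C, m ≠ 0 ∧ wt2 m = w}

noncomputable def dualCode2 (F : Type*) [Field F] {ι₁ ι₂ : Type*} [Fintype ι₁] [Fintype ι₂]
    (C : Submodule F (ι₂ → ι₁ → F)) : Submodule F (ι₂ → ι₁ → F) where
  carrier := {x | ∀ c ∈ C, ∑ i, ∑ j, x i j * c i j = 0}
  zero_mem' := by intro c _; simp
  add_mem' := by
    intro x y hx hy c hc
    simp only [Pi.add_apply, add_mul, Finset.sum_add_distrib]
    rw [hx c hc, hy c hc, add_zero]
  smul_mem' := by
    intro a x hx c hc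
    simp only [Pi.smul_apply, smul_eq_mul, mul_assoc, ← Finset.mul_sum]
    rw [hx c hc, mul_zero]

/-- The linear map `c ↦ v ⊗ c`, sending a word `c` to the matrix `(v i * c j)_{i,j}`. -/
noncomputable def vTensor (F : Type*) [Field F] {ι₁ ι₂ : Type*} (v : ι₁ → F) :
    (ι₂ → F) →ₗ[F] (ι₁ → ι₂ → F) where
  toFun c := fun i j => v i * c j
  map_add' c d := by funext i j; simp [mul_add]
  map_smul' a c := by funext i j; simp only [Pi.smul_apply, smul_eq_mul, RingHom.id_apply]; ring

/-- The vector `(0^{a-d}, α₁^d, …, α_q^d) ∈ F^{q+1}` (with the convention `0^0 = 1`). -/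
noncomputable def vproj (F : Type*) [Field F] (a d : ℕ) : Option F → F :=
  fun p => Option.elim p (if d = a then (1 : F) else 0) (fun α => α ^ d)

/-- The code `C_e(a,b) = Σ_{d=0}^{a} ⟨(0^{a-d}, α₁^d, …, α_q^d)⟩ ⊗ PRS_q(b - ed + 1)`
inside `F^{(q+1)²}`: the AG code on the Hirzebruch surface `H_e` parametrized by
`aS_e + bF_e`, evaluated at all `(q+1)²` rational points. -/
noncomputable def CE (F : Type*) [Field F] (e a b : ℕ) :
    Submodule F (Option F → Option F → F) :=
  ⨆ d ∈ Finset.Iic a, (PRS F ((b : ℤ) - e * d + 1)).map (vTensor F (vproj F a d))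

/-!
A word `m` of the dual code is orthogonal to every `v_d ⊗ c` with `v_d = (0^{a-d}, α^d)` and
`c ∈ PRS_q(b - ed + 1)`, so each contraction `Σ_i m_i v_d(i)` lies in the dual of
`PRS_q(b - ed + 1)`. Projective Reed–Solomon codes are MDS: a word of weight at most `k` orthogonal
to the monomials `(0^{k-1-d}, α^d)`, `d < k`, vanishes (isolate one of its affine entries by a
Lagrange basis polynomial on its support). A word of weight at most `min{a, b-ea} + 1` has light
contractions, so they vanish; then every column of `m` is orthogonal to `v_0, …, v_a` and vanishes.

For the upper bound, the Lagrange weights `∏_{γ ≠ β} (β - γ)⁻¹` on `a + 1` affine points `β`,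
completed by `-1` at the point at infinity, form a word of weight `a + 2` orthogonal to
`v_0, …, v_a`: pairing with `v_d` computes the coefficient of `X^a` in the interpolation of `X^d`.
Placed in a single column it is a word of the dual code.
-/

open Finset Polynomial

section HammingWeight

variable {F : Type*} [Zero F] [DecidableEq F]

theorem hammingNorm_le_of_support_subset_image {α β : Type*} [Fintype α] [Fintype β]
    {f : α → F} {w : β → F} (g : α → β) (h : ∀ k, w k ≠ 0 → ∃ p, g p = k ∧ f p ≠ 0) :
    hammingNorm w ≤ hammingNorm f := by
  classical
  calc hammingNorm w ≤ ((univ.filter fun p => f p ≠ 0).image g).card := by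
        refine card_le_card fun k hk => ?_
        obtain ⟨p, rfl, hp⟩ := h k (mem_filter.mp hk).2
        exact mem_image_of_mem g (by simpa using hp)
    _ ≤ hammingNorm f := card_image_le

theorem hammingNorm_option {ι : Type*} [Fintype ι] (μ : Option ι → F) :
    hammingNorm μ = hammingNorm (fun i => μ (some i)) + if μ none = 0 then 0 else 1 := by
  simp only [hammingNorm, card_filter, Fintype.sum_option, ite_not]
  ring

theorem hammingNorm_pi_single {ι : Type*} [Fintype ι] [DecidableEq ι] (i : ι) {x : F}
    (hx : x ≠ 0) : hammingNorm (Pi.single (M := fun _ => F) i x) = 1 := by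
  simp [hammingNorm, Pi.single_apply, filter_eq', hx]

variable {ι₁ ι₂ : Type*} [Fintype ι₁] [Fintype ι₂]

theorem wt2_eq_zero {m : ι₂ → ι₁ → F} : wt2 m = 0 ↔ m = 0 := by
  rw [wt2, hammingNorm_eq_zero]
  exact ⟨fun h => funext₂ fun i j => congrFun h (i, j), fun h => h ▸ rfl⟩

theorem hammingNorm_column_le_wt2 (m : ι₂ → ι₁ → F) (j : ι₁) :
    hammingNorm (fun i => m i j) ≤ wt2 m :=
  hammingNorm_le_of_support_subset_image Prod.fst fun i hi => ⟨(i, j), rfl, hi⟩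

end HammingWeight

section MatrixCodes

variable {F : Type*} [Field F] {ι₁ ι₂ : Type*} [Fintype ι₁] [Fintype ι₂]

theorem hammingNorm_sum_mul_le_wt2 [DecidableEq F] (m : ι₂ → ι₁ → F) (v : ι₂ → F) :
    hammingNorm (fun j => ∑ i, m i j * v i) ≤ wt2 m :=
  hammingNorm_le_of_support_subset_image Prod.snd fun j hj => by
    obtain ⟨i, -, hi⟩ := exists_ne_zero_of_sum_ne_zero hj
    exact ⟨(i, j), rfl, left_ne_zero_of_mul hi⟩

theorem wt2_vTensor [DecidableEq F] (v : ι₂ → F) (c : ι₁ → F) :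
    wt2 (vTensor F v c) = hammingNorm v * hammingNorm c := by
  simp only [wt2, hammingNorm, vTensor, LinearMap.coe_mk, AddHom.coe_mk, ne_eq, mul_eq_zero,
    not_or, ← card_product, ← filter_product, univ_product_univ]

theorem le_minDist2 [DecidableEq F] {C : Submodule F (ι₂ → ι₁ → F)} {k : ℕ}
    (hC : ∃ m ∈ C, m ≠ 0) (h : ∀ m ∈ C, wt2 m < k → m = 0) : k ≤ minDist2 F C := by
  obtain ⟨m₀, hm₀, hm₀0⟩ := hC
  refine le_csInf ⟨_, m₀, hm₀, hm₀0, rfl⟩ ?_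
  rintro _ ⟨m, hm, hm0, rfl⟩
  by_contra! hlt
  exact hm0 (h m hm hlt)

theorem minDist2_le [DecidableEq F] {C : Submodule F (ι₂ → ι₁ → F)} {m : ι₂ → ι₁ → F}
    (hm : m ∈ C) (hm0 : m ≠ 0) : minDist2 F C ≤ wt2 m :=
  Nat.sInf_le ⟨m, hm, hm0, rfl⟩

theorem mem_dualCode2_iSup {κ : Sort*} {C : κ → Submodule F (ι₂ → ι₁ → F)}
    {x : ι₂ → ι₁ → F} : x ∈ dualCode2 F (⨆ k, C k) ↔ ∀ k, x ∈ dualCode2 F (C k) := by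
  refine ⟨fun hx k c hc => hx c (Submodule.mem_iSup_of_mem k hc), fun hx c hc => ?_⟩
  refine Submodule.iSup_induction C (motive := fun c => ∑ i, ∑ j, x i j * c i j = 0) hc
    (fun k c hc => hx k c hc) (by simp) fun c c' hc hc' => ?_
  simp only [Pi.add_apply, mul_add, sum_add_distrib, hc, hc', add_zero]

theorem mem_dualCode2_map_vTensor {v : ι₂ → F} {C : Submodule F (ι₁ → F)}
    {x : ι₂ → ι₁ → F} :
    x ∈ dualCode2 F (C.map (vTensor F v)) ↔ (fun j => ∑ i, x i j * v i) ∈ dualCode F C := by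
  have hpair : ∀ c : ι₁ → F,
      ∑ i, ∑ j, x i j * vTensor F v c i j = ∑ j, (∑ i, x i j * v i) * c j := fun c => by
    simp only [vTensor, LinearMap.coe_mk, AddHom.coe_mk, sum_mul]
    rw [sum_comm]
    exact sum_congr rfl fun j _ => sum_congr rfl fun i _ => by ring
  simp only [dualCode2, dualCode, Submodule.mem_mk, AddSubmonoid.mem_mk, AddSubsemigroup.mem_mk,
    Set.mem_ofPred_eq, Submodule.mem_map, forall_exists_index, and_imp]
  exact ⟨fun hx c hc => (hpair c).symm.trans (hx _ c hc rfl),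
    fun hx _ c hc hcm => hcm ▸ (hpair c).trans (hx c hc)⟩

end MatrixCodes

section ProjectiveLine

variable {F : Type*} [Field F]

theorem vproj_mem_PRS {D d : ℕ} (hd : d ≤ D) : vproj F D d ∈ PRS F ((D : ℤ) + 1) := by
  rw [PRS, if_neg (by omega), show ((D : ℤ) + 1 - 1).toNat = D by omega]
  refine ⟨MvPolynomial.X 0 ^ (D - d) * MvPolynomial.X 1 ^ d, ?_, ?_⟩
  · have := (MvPolynomial.isHomogeneous_X_pow (R := F) (0 : Fin 2) (D - d)).mul
      (MvPolynomial.isHomogeneous_X_pow (R := F) (1 : Fin 2) d)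
    rwa [Nat.sub_add_cancel hd] at this
  · funext p
    cases p with
    | none =>
      by_cases hdD : d = D
      · subst hdD; simp [vproj, PRSpt]
      · simp [vproj, PRSpt, hdD, zero_pow (show D - d ≠ 0 by omega)]
    | some α => simp [vproj, PRSpt]

theorem sum_nodalWeight_mul_pow [DecidableEq F] {T : Finset F} {a d : ℕ} (hT : T.card = a + 1)
    (hd : d ≤ a) : ∑ β ∈ T, Lagrange.nodalWeight T id β * β ^ d = if d = a then 1 else 0 := by
  have hdeg : (X ^ d : F[X]).degree < T.card := by
    rw [degree_X_pow, hT]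
    exact_mod_cast Nat.lt_succ_of_le hd
  have := Lagrange.coeff_eq_sum (Set.injOn_id (T : Set F)) hdeg
  rw [hT, Nat.add_sub_cancel, coeff_X_pow] at this
  simp only [eq_comm (a := a)] at this
  rw [this]
  refine sum_congr rfl fun β _ => ?_
  simp [Lagrange.nodalWeight, div_eq_mul_inv, mul_comm]

variable [Fintype F]

theorem sum_mul_vproj_eq {D d : ℕ} (μ : Option F → F) :
    ∑ j, μ j * vproj F D d j = μ none * (if d = D then 1 else 0) + ∑ α, μ (some α) * α ^ d :=
  Fintype.sum_option _

/-- The left-hand side pairs `μ` with the values at `ℙ¹(F)` of the degree-`D` homogenisation of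
`p`, which is a combination of the `vproj F D d`. -/
theorem sum_mul_eval_add_mul_coeff_eq_zero {D : ℕ} {μ : Option F → F}
    (hμ : ∀ d ≤ D, ∑ j, μ j * vproj F D d j = 0) {p : F[X]} (hp : p.natDegree ≤ D) :
    ∑ α, μ (some α) * p.eval α + μ none * p.coeff D = 0 := by
  calc ∑ α, μ (some α) * p.eval α + μ none * p.coeff D
      = ∑ d ∈ range (D + 1), p.coeff d * ∑ j, μ j * vproj F D d j := by
        simp only [sum_mul_vproj_eq, mul_add, sum_add_distrib, mul_ite, mul_one, mul_zero,
          sum_ite_eq', mem_range, Nat.lt_succ_self, if_true, mul_sum]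
        rw [sum_comm, add_comm, mul_comm]
        congr 1
        refine sum_congr rfl fun α _ => ?_
        rw [eval_eq_sum_range' (Nat.lt_succ_of_le hp), mul_sum]
        exact sum_congr rfl fun d _ => by ring
    _ = 0 := sum_eq_zero fun d hd => by
        rw [hμ d (Nat.lt_succ_iff.mp (mem_range.mp hd)), mul_zero]

variable [DecidableEq F]

theorem eq_zero_of_hammingNorm_le_of_sum_mul_vproj_eq_zero {D : ℕ} {μ : Option F → F}
    (hw : hammingNorm μ ≤ D + 1) (hμ : ∀ d ≤ D, ∑ j, μ j * vproj F D d j = 0) : μ = 0 := by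
  set S := univ.filter fun α => μ (some α) ≠ 0
  have hS : S.card + (if μ none = 0 then 0 else 1) ≤ D + 1 := hammingNorm_option μ ▸ hw
  have haffine : ∀ α₀, μ (some α₀) = 0 := by
    intro α₀
    by_contra hα₀
    have hα₀S : α₀ ∈ S := mem_filter.mpr ⟨mem_univ _, hα₀⟩
    have hinj : Set.InjOn (id : F → F) S := Set.injOn_id _
    set p := Lagrange.basis S id α₀
    have hp : p.natDegree = S.card - 1 := Lagrange.natDegree_basis hinj hα₀S
    have hSpos : 0 < S.card := card_pos.mpr ⟨α₀, hα₀S⟩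
    have heval : ∑ α, μ (some α) * p.eval α = μ (some α₀) := by
      rw [sum_eq_single α₀ (fun β _ hβ => ?_) (by simp)]
      · exact mul_right_eq_self₀.mpr (Or.inl (Lagrange.eval_basis_self hinj hα₀S))
      · by_cases hβS : β ∈ S
        · rw [show p.eval β = 0 from Lagrange.eval_basis_of_ne (v := id) (Ne.symm hβ) hβS,
            mul_zero]
        · rw [show μ (some β) = 0 by simpa [S] using hβS, zero_mul]
    -- if `μ` does not vanish at infinity, `S` is too small for `p` to reach degree `D`
    have hcoeff : μ none * p.coeff D = 0 := by
      by_cases h0 : μ none = 0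
      · rw [h0, zero_mul]
      · rw [if_neg h0] at hS
        rw [coeff_eq_zero_of_natDegree_lt (show p.natDegree < D by omega), mul_zero]
    have := sum_mul_eval_add_mul_coeff_eq_zero hμ (p := p) (by omega)
    rw [heval, hcoeff, add_zero] at this
    exact hα₀ this
  have hinfty : μ none = 0 := by
    simpa [sum_mul_vproj_eq, haffine, vproj] using hμ D le_rfl
  funext j
  cases j with
  | none => exact hinfty
  | some α => exact haffine α

theorem exists_hammingNorm_le_sum_mul_vproj_eq_zero {a : ℕ} (ha : a + 1 ≤ Fintype.card F) :
    ∃ y : Option F → F, y ≠ 0 ∧ hammingNorm y ≤ a + 2 ∧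
      ∀ d ≤ a, ∑ j, y j * vproj F a d j = 0 := by
  obtain ⟨T, -, hT⟩ := exists_subset_card_eq (s := (univ : Finset F)) (n := a + 1)
    (by rwa [card_univ])
  refine ⟨fun p => Option.elim p (-1) fun β => if β ∈ T then Lagrange.nodalWeight T id β else 0,
    fun h => by simpa using congrFun h none, ?_, fun d hd => ?_⟩
  · simp only [hammingNorm_option, Option.elim_none, Option.elim_some, neg_eq_zero, one_ne_zero,
      if_false]
    have : hammingNorm (fun β => if β ∈ T then Lagrange.nodalWeight T id β else 0) ≤ T.card :=
      card_le_card fun β hβ => by contrapose! hβ; simp [hβ]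
    omega
  · rw [sum_mul_vproj_eq]
    simp only [Option.elim_none, Option.elim_some, ite_mul, zero_mul, sum_ite_mem, univ_inter,
      sum_nodalWeight_mul_pow hT hd]
    split_ifs <;> simp

end ProjectiveLine

section HirzebruchCode

variable {F : Type*} [Field F] [Fintype F] {e a b : ℕ}

theorem mem_dualCode2_CE {x : Option F → Option F → F} :
    x ∈ dualCode2 F (CE F e a b) ↔ ∀ d ≤ a,
      (fun j => ∑ i, x i j * vproj F a d i) ∈ dualCode F (PRS F ((b : ℤ) - e * d + 1)) := by
  simp only [CE, mem_dualCode2_iSup, mem_dualCode2_map_vTensor, mem_Iic]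

theorem vTensor_mem_dualCode2_CE {y : Option F → F}
    (hy : ∀ d ≤ a, ∑ i, y i * vproj F a d i = 0) (c : Option F → F) :
    vTensor F y c ∈ dualCode2 F (CE F e a b) := by
  refine mem_dualCode2_CE.mpr fun d hd => ?_
  convert Submodule.zero_mem _ using 1
  funext j
  simp [vTensor, mul_right_comm _ (c j), ← sum_mul, hy d hd]

theorem eq_zero_of_mem_dualCode2_CE [DecidableEq F] (hb : e * a ≤ b)
    {m : Option F → Option F → F} (hm : m ∈ dualCode2 F (CE F e a b))
    (hw : wt2 m ≤ min a (b - e * a) + 1) : m = 0 := by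
  have hcontract : ∀ d ≤ a, ∀ j, ∑ i, m i j * vproj F a d i = 0 := by
    intro d hd
    have hed : e * d ≤ e * a := Nat.mul_le_mul_left e hd
    have hPRS : ((b : ℤ) - e * d + 1) = ((b - e * d : ℕ) : ℤ) + 1 := by
      push_cast [hed.trans hb]; ring
    refine congrFun (eq_zero_of_hammingNorm_le_of_sum_mul_vproj_eq_zero (D := b - e * d) ?_
      fun k hk => mem_dualCode2_CE.mp hm d hd _ (hPRS ▸ vproj_mem_PRS hk))
    have := hammingNorm_sum_mul_le_wt2 m (vproj F a d)
    omega
  funext i j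
  refine congrFun (eq_zero_of_hammingNorm_le_of_sum_mul_vproj_eq_zero (D := a) ?_
    fun d hd => hcontract d hd j) i
  have := hammingNorm_column_le_wt2 m j
  omega

end HirzebruchCode

theorem CE_dual_minDist_general (F : Type*) [Field F] [Fintype F] [DecidableEq F] (q e a b : ℕ)
    (hq : Fintype.card F = q) (he : 2 ≤ e) (ha2 : a ≤ q - 1)
    (hb1 : e * a ≤ b) :
    min a (b - e * a) + 2 ≤ minDist2 F (dualCode2 F (CE F e a b)) ∧
      minDist2 F (dualCode2 F (CE F e a b)) ≤ min a b + 2 := by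
  obtain ⟨y, hy0, hyw, hy⟩ := exists_hammingNorm_le_sum_mul_vproj_eq_zero (F := F) (a := a)
    (by have := Fintype.card_pos (α := F); omega)
  set x := vTensor F y (Pi.single none 1 : Option F → F)
  have hx : x ∈ dualCode2 F (CE F e a b) := vTensor_mem_dualCode2_CE hy _
  have hxw : wt2 x = hammingNorm y := by
    rw [wt2_vTensor, hammingNorm_pi_single _ one_ne_zero, mul_one]
  have hx0 : x ≠ 0 := fun h => hy0 (hammingNorm_eq_zero.mp (hxw ▸ wt2_eq_zero.mpr h))
  refine ⟨le_minDist2 ⟨x, hx, hx0⟩ fun m hm hw => eq_zero_of_mem_dualCode2_CE hb1 hm (by omega),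
    ?_⟩
  calc minDist2 F (dualCode2 F (CE F e a b)) ≤ wt2 x := minDist2_le hx hx0
    _ ≤ a + 2 := hxw ▸ hyw
    _ = min a b + 2 := by rw [min_eq_left ((Nat.le_mul_of_pos_left a (by omega)).trans hb1)]

/-- for `e ≥ 2`, `1 ≤ a ≤ q-1` and `0 ≤ b - ea ≤ q-1`, the minimum distance
`d^⊥` of `C_e(a,b)^⊥` satisfies `min{a, b-ea} + 2 ≤ d^⊥ ≤ min{a, b} + 2`. -/
theorem CE_dual_minDist (F : Type*) [Field F] [Fintype F] [DecidableEq F] (q e a b : ℕ)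
    (hq : Fintype.card F = q) (he : 2 ≤ e) (ha1 : 1 ≤ a) (ha2 : a ≤ q - 1)
    (hb1 : e * a ≤ b) (hb2 : b - e * a ≤ q - 1) :
    min a (b - e * a) + 2 ≤ minDist2 F (dualCode2 F (CE F e a b)) ∧
      minDist2 F (dualCode2 F (CE F e a b)) ≤ min a b + 2 :=
  CE_dual_minDist_general F q e a b hq he ha2 hb1
end
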